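/- arXiv:1407.7687 — 3 statements merged into one kernel-verified Lean document; each statement's English description precedes it below -/
import Mathlib

section
/- If X is a compact metric space and f : X → Y is an Edelstein contracting map into a metric space Y (i.e., d_Y(f(x),f(x')) < d_X(x,x') for all distinct x, x'), then f is Rakotch contracting: there exists φ : [0,∞) → [0,∞) with d_Y(f(x),f(x')) ≤ φ(d_X(x,x')) for all x, x', and sup_{a≤t<∞} φ(t)/t < 1 for every a > 0. -/
/-!
On the compact set of pairs at distance at least `a > 0`, the ratio
`dist (f x) (f x') / dist x x'` is continuous and pointwise `< 1`, so its maximum `c a` is `< 1`.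
Hence `φ t := sup {dist (f x) (f x') | dist x x' = t}` satisfies `φ t ≤ c a * t` for all `t ≥ a`.
-/

section

open Set

variable {X Y : Type*} [PseudoMetricSpace X] [PseudoMetricSpace Y]

lemma lipschitzWith_one_of_dist_lt {f : X → Y}
    (hf : ∀ x x', x ≠ x' → dist (f x) (f x') < dist x x') : LipschitzWith 1 f :=
  LipschitzWith.mk_one fun x x' => by
    rcases eq_or_ne x x' with rfl | hne
    · simp
    · exact (hf x x' hne).le

lemma exists_lt_one_dist_le_mul_of_le_dist [CompactSpace X] {f : X → Y}
    (hf : ∀ x x', x ≠ x' → dist (f x) (f x') < dist x x') {a : ℝ} (ha : 0 < a) :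
    ∃ c, 0 ≤ c ∧ c < 1 ∧ ∀ x x', a ≤ dist x x' → dist (f x) (f x') ≤ c * dist x x' := by
  set K : Set (X × X) := {p | a ≤ dist p.1 p.2}
  have hK : IsCompact K := (isClosed_le continuous_const continuous_dist).isCompact
  have hdist_pos : ∀ p ∈ K, 0 < dist p.1 p.2 := fun p hp => ha.trans_le hp
  have hne : ∀ p ∈ K, p.1 ≠ p.2 := fun p hp h => by simpa [h] using hdist_pos p hp
  rcases K.eq_empty_or_nonempty with hKe | hKne
  · refine ⟨0, le_rfl, zero_lt_one, fun x x' hxx' => ?_⟩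
    exact absurd (show (x, x') ∈ K from hxx') (hKe ▸ notMem_empty _)
  set g : X × X → ℝ := fun p => dist (f p.1) (f p.2) / dist p.1 p.2
  have hg : ContinuousOn g K := by
    have hfc := (lipschitzWith_one_of_dist_lt hf).continuous
    exact ((hfc.comp continuous_fst).dist (hfc.comp continuous_snd)).continuousOn.div
      continuous_dist.continuousOn fun p hp => (hdist_pos p hp).ne'
  obtain ⟨p, hpK, hpmax⟩ := hK.exists_isMaxOn hKne hg
  refine ⟨g p, by positivity, (div_lt_one (hdist_pos p hpK)).2 (hf _ _ (hne p hpK)),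
    fun x x' hxx' => ?_⟩
  exact (div_le_iff₀ (hdist_pos (x, x') hxx')).1 (hpmax (show (x, x') ∈ K from hxx'))

noncomputable def distModulus (f : X → Y) (t : ℝ) : ℝ :=
  sSup ((fun p : X × X => dist (f p.1) (f p.2)) '' {p | dist p.1 p.2 = t})

lemma distModulus_nonneg (f : X → Y) (t : ℝ) : 0 ≤ distModulus f t :=
  Real.sSup_nonneg <| forall_mem_image.2 fun _ _ => dist_nonneg

lemma dist_le_distModulus {f : X → Y} (hf : LipschitzWith 1 f) (x x' : X) :
    dist (f x) (f x') ≤ distModulus f (dist x x') := by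
  refine le_csSup ⟨dist x x', forall_mem_image.2 fun p hp => ?_⟩ ⟨(x, x'), rfl, rfl⟩
  simpa [hp.out] using hf.dist_le_mul p.1 p.2

lemma distModulus_le {f : X → Y} {t b : ℝ} (hb : 0 ≤ b)
    (h : ∀ x x', dist x x' = t → dist (f x) (f x') ≤ b) : distModulus f t ≤ b :=
  Real.sSup_le (forall_mem_image.2 fun p hp => h p.1 p.2 hp) hb

end

/-- For a compact metric space `X`, every Edelstein contracting map `f : X → Y`
is Rakotch contracting. -/
theorem edelstein_implies_rakotch_of_compact
    {X Y : Type*} [MetricSpace X] [CompactSpace X] [MetricSpace Y] (f : X → Y)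
    (hEd : ∀ x x' : X, x ≠ x' → dist (f x) (f x') < dist x x') :
    ∃ φ : ℝ → ℝ, (∀ t, 0 ≤ t → 0 ≤ φ t) ∧
      (∀ x x' : X, dist (f x) (f x') ≤ φ (dist x x')) ∧
      ∀ a : ℝ, 0 < a → ∃ c : ℝ, c < 1 ∧ ∀ t, a ≤ t → φ t ≤ c * t := by
  refine ⟨distModulus f, fun t _ => distModulus_nonneg f t,
    dist_le_distModulus (lipschitzWith_one_of_dist_lt hEd), fun a ha => ?_⟩
  obtain ⟨c, hc_nonneg, hc_lt_one, hc⟩ := exists_lt_one_dist_le_mul_of_le_dist hEd ha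
  refine ⟨c, hc_lt_one, fun t hat => distModulus_le (mul_nonneg hc_nonneg (ha.le.trans hat)) ?_⟩
  rintro x x' rfl
  exact hc x x' hat
end

section
/- If f : X → Y is a Rakotch contracting map between compact metric spaces, then the induced pushforward map Pf : PX → PY on spaces of Borel probability measures with the Wasserstein metric is also Rakotch contracting. -/
open MeasureTheory

/-- The Wasserstein (Kantorovich) distance between two Borel probability measures. -/
noncomputable def wassersteinDist {X : Type*} [MetricSpace X] [MeasurableSpace X]
    (μ η : Measure X) : ℝ :=
  sInf {r : ℝ | ∃ lam : Measure (X × X), IsProbabilityMeasure lam ∧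
    lam.map Prod.fst = μ ∧ lam.map Prod.snd = η ∧ r = ∫ p, dist p.1 p.2 ∂lam}

/-!
If `λ` couples `μ` and `η` with cost `r ≥ W := W(μ, η)`, then `(f × f)_* λ` couples `Pf μ` and
`Pf η`. The map `f` is `1`-Lipschitz, and on pairs at distance at least `W / 2` it contracts by
`k := sup_{t ≥ W/2} φ t / t < 1`; hence `d(f x, f x') ≤ k d(x, x') + (1 - k) min (d(x, x'), r / 2)`
pointwise, and integrating gives cost at most `(1 + k) / 2 * r` for the pushed coupling. So
`W(Pf μ, Pf η) ≤ (1 + k) / 2 * W`, a Rakotch modulus because `k` only decreases as `W` grows.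
-/

open Set

def IsRakotchModulus (φ : ℝ → ℝ) : Prop :=
  ∀ a : ℝ, 0 < a → ∃ c : ℝ, c < 1 ∧ ∀ t, a ≤ t → φ t ≤ c * t

-- Clipped at `0`, so that `(1 + contractionRatio φ a) / 2` is positive.
noncomputable def contractionRatio (φ : ℝ → ℝ) (a : ℝ) : ℝ :=
  sSup ((fun t => max (φ t / t) 0) '' Ici a)

noncomputable def averagedModulus (φ : ℝ → ℝ) (t : ℝ) : ℝ :=
  (1 + contractionRatio φ (t / 2)) / 2 * t

lemma max_mem_upperBounds_ratio {φ : ℝ → ℝ} {a c : ℝ} (ha : 0 < a)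
    (hc : ∀ t, a ≤ t → φ t ≤ c * t) :
    max c 0 ∈ upperBounds ((fun t => max (φ t / t) 0) '' Ici a) := by
  rintro _ ⟨t, ht, rfl⟩
  exact max_le_max ((div_le_iff₀ (ha.trans_le ht)).2 (hc t ht)) le_rfl

namespace IsRakotchModulus

variable {φ : ℝ → ℝ} (hφ : IsRakotchModulus φ) {a : ℝ}
include hφ

lemma bddAbove_ratio (ha : 0 < a) : BddAbove ((fun t => max (φ t / t) 0) '' Ici a) :=
  let ⟨_, _, hc⟩ := hφ a ha
  ⟨_, max_mem_upperBounds_ratio ha hc⟩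

lemma contractionRatio_lt_one (ha : 0 < a) : contractionRatio φ a < 1 := by
  obtain ⟨c, hc1, hc⟩ := hφ a ha
  exact (csSup_le (nonempty_Ici.image _) (max_mem_upperBounds_ratio ha hc)).trans_lt
    (max_lt hc1 one_pos)

lemma contractionRatio_nonneg (ha : 0 < a) : 0 ≤ contractionRatio φ a :=
  (le_max_right _ _).trans (le_csSup (hφ.bddAbove_ratio ha) ⟨a, self_mem_Ici, rfl⟩)

lemma contractionRatio_anti {b : ℝ} (ha : 0 < a) (hab : a ≤ b) :
    contractionRatio φ b ≤ contractionRatio φ a :=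
  csSup_le_csSup (hφ.bddAbove_ratio ha) (nonempty_Ici.image _)
    (image_mono (Ici_subset_Ici.2 hab))

lemma le_contractionRatio_mul {t : ℝ} (ha : 0 < a) (hat : a ≤ t) :
    φ t ≤ contractionRatio φ a * t := by
  have hratio : φ t / t ≤ contractionRatio φ a :=
    (le_max_left _ _).trans (le_csSup (hφ.bddAbove_ratio ha) ⟨t, hat, rfl⟩)
  exact (div_le_iff₀ (ha.trans_le hat)).1 hratio

lemma averagedModulus : IsRakotchModulus (averagedModulus φ) := by
  intro a ha
  refine ⟨(1 + contractionRatio φ (a / 2)) / 2,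
    by linarith [hφ.contractionRatio_lt_one (half_pos ha)], fun t hat => ?_⟩
  have := hφ.contractionRatio_anti (half_pos ha) (by linarith : a / 2 ≤ t / 2)
  exact mul_le_mul_of_nonneg_right (by linarith) (ha.le.trans hat)

lemma lipschitzWith_one {X Y : Type*} [MetricSpace X] [PseudoMetricSpace Y] {f : X → Y}
    (hf : ∀ x x', dist (f x) (f x') ≤ φ (dist x x')) : LipschitzWith 1 f := by
  refine LipschitzWith.of_dist_le_mul fun x x' => ?_
  rcases eq_or_ne x x' with rfl | hne
  · simp
  obtain ⟨c, hc1, hc⟩ := hφ _ (dist_pos.2 hne)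
  calc dist (f x) (f x') ≤ c * dist x x' := (hf x x').trans (hc _ le_rfl)
    _ ≤ _ := by rw [NNReal.coe_one, one_mul]; nlinarith [dist_pos.2 hne]

end IsRakotchModulus

section Wasserstein

variable {X Y : Type*} [MeasurableSpace X] [MetricSpace Y] [MeasurableSpace Y]

lemma wassersteinDist_nonneg (μ η : Measure Y) : 0 ≤ wassersteinDist μ η := by
  refine Real.sInf_nonneg ?_
  rintro _ ⟨lam, -, -, -, rfl⟩
  exact integral_nonneg fun _ => dist_nonneg

lemma wassersteinDist_le_integral {μ η : Measure Y} {lam : Measure (Y × Y)}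
    [IsProbabilityMeasure lam] (h₁ : lam.map Prod.fst = μ) (h₂ : lam.map Prod.snd = η) :
    wassersteinDist μ η ≤ ∫ p, dist p.1 p.2 ∂lam := by
  refine csInf_le ⟨0, ?_⟩ ⟨lam, inferInstance, h₁, h₂, rfl⟩
  rintro _ ⟨lam, -, -, -, rfl⟩
  exact integral_nonneg fun _ => dist_nonneg

lemma le_wassersteinDist {μ η : Measure Y} [IsProbabilityMeasure μ] [IsProbabilityMeasure η]
    {b : ℝ} (h : ∀ lam : Measure (Y × Y), IsProbabilityMeasure lam →
      lam.map Prod.fst = μ → lam.map Prod.snd = η → b ≤ ∫ p, dist p.1 p.2 ∂lam) :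
    b ≤ wassersteinDist μ η := by
  refine le_csInf ⟨_, μ.prod η, inferInstance, Measure.fst_prod, Measure.snd_prod, rfl⟩ ?_
  rintro _ ⟨lam, hlam, h₁, h₂, rfl⟩
  exact h lam hlam h₁ h₂

lemma wassersteinDist_map_le_integral [OpensMeasurableSpace Y] [SecondCountableTopology Y]
    {f : X → Y} (hf : Measurable f) {μ η : Measure X} {lam : Measure (X × X)}
    [IsProbabilityMeasure lam] (h₁ : lam.map Prod.fst = μ) (h₂ : lam.map Prod.snd = η) :
    wassersteinDist (μ.map f) (η.map f) ≤ ∫ p, dist (f p.1) (f p.2) ∂lam := by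
  have hF : Measurable fun p : X × X => (f p.1, f p.2) :=
    (hf.comp measurable_fst).prodMk (hf.comp measurable_snd)
  have : IsProbabilityMeasure (lam.map fun p => (f p.1, f p.2)) :=
    Measure.isProbabilityMeasure_map hF.aemeasurable
  calc wassersteinDist (μ.map f) (η.map f)
      ≤ ∫ q, dist q.1 q.2 ∂(lam.map fun p => (f p.1, f p.2)) := by
        refine wassersteinDist_le_integral ?_ ?_
        · rw [Measure.map_map measurable_fst hF, ← h₁, Measure.map_map hf measurable_fst]; rfl
        · rw [Measure.map_map measurable_snd hF, ← h₂, Measure.map_map hf measurable_snd]; rfl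
    _ = ∫ p, dist (f p.1) (f p.2) ∂lam :=
        integral_map hF.aemeasurable continuous_dist.measurable.aestronglyMeasurable

end Wasserstein

lemma integral_le_one_add_div_two_mul_integral {Ω : Type*} [MeasurableSpace Ω] {μ : Measure Ω}
    [IsProbabilityMeasure μ] {g h : Ω → ℝ} {k : ℝ} (hg : Integrable g μ) (hh : Integrable h μ)
    (hh₀ : 0 ≤ h) (hk : k ≤ 1) (hgh : g ≤ h)
    (hfar : ∀ ω, (∫ ω, h ω ∂μ) / 2 ≤ h ω → g ω ≤ k * h ω) :
    ∫ ω, g ω ∂μ ≤ (1 + k) / 2 * ∫ ω, h ω ∂μ := by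
  set r := ∫ ω, h ω ∂μ
  have hr : 0 ≤ r := integral_nonneg hh₀
  have hmin : Integrable (fun ω => min (h ω) (r / 2)) μ := hh.inf (integrable_const _)
  have hpt : ∀ ω, g ω ≤ k * h ω + (1 - k) * min (h ω) (r / 2) := by
    intro ω
    rcases le_or_gt (r / 2) (h ω) with hfar' | hnear
    · rw [min_eq_right hfar']
      nlinarith [hfar ω hfar']
    · rw [min_eq_left hnear.le]
      linarith [hgh ω]
  have hmin_le : ∫ ω, min (h ω) (r / 2) ∂μ ≤ r / 2 := by
    simpa using integral_mono hmin (integrable_const (r / 2)) fun ω => min_le_right _ _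
  calc ∫ ω, g ω ∂μ ≤ ∫ ω, (k * h ω + (1 - k) * min (h ω) (r / 2)) ∂μ :=
        integral_mono hg ((hh.const_mul k).add (hmin.const_mul _)) hpt
    _ = k * r + (1 - k) * ∫ ω, min (h ω) (r / 2) ∂μ := by
        rw [integral_add (hh.const_mul k) (hmin.const_mul _), integral_const_mul,
          integral_const_mul]
    _ ≤ (1 + k) / 2 * r := by nlinarith

lemma wassersteinDist_map_le_mul_of_lipschitzWith_one {X Y : Type*} [MetricSpace X]
    [CompactSpace X] [MeasurableSpace X] [BorelSpace X] [MetricSpace Y] [MeasurableSpace Y]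
    [BorelSpace Y] [SecondCountableTopology Y] {f : X → Y} (hf : LipschitzWith 1 f)
    {μ η : Measure X} [IsProbabilityMeasure μ] [IsProbabilityMeasure η] {k : ℝ} (hk₀ : 0 ≤ k)
    (hk₁ : k ≤ 1) (hfar : ∀ x x', wassersteinDist μ η / 2 ≤ dist x x' →
      dist (f x) (f x') ≤ k * dist x x') :
    wassersteinDist (μ.map f) (η.map f) ≤ (1 + k) / 2 * wassersteinDist μ η := by
  have hκ : 0 < (1 + k) / 2 := by linarith
  rw [← div_le_iff₀' hκ]
  refine le_wassersteinDist fun lam _ h₁ h₂ => ?_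
  have hcont : Continuous fun p : X × X => dist (f p.1) (f p.2) :=
    continuous_dist.comp ((hf.continuous.comp continuous_fst).prodMk
      (hf.continuous.comp continuous_snd))
  have hW := wassersteinDist_le_integral h₁ h₂
  rw [div_le_iff₀' hκ]
  refine (wassersteinDist_map_le_integral hf.continuous.measurable h₁ h₂).trans ?_
  refine integral_le_one_add_div_two_mul_integral
    (hcont.integrable_of_hasCompactSupport (HasCompactSupport.of_compactSpace _))
    (continuous_dist.integrable_of_hasCompactSupport (HasCompactSupport.of_compactSpace _))
    (fun _ => dist_nonneg) hk₁ (fun p => by simpa using hf.dist_le_mul p.1 p.2)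
    fun p hp => hfar p.1 p.2 (by linarith)

/-- If `f : X → Y` is Rakotch contracting between compact metric spaces, then the
pushforward map on Borel probability measures is Rakotch contracting for the
Wasserstein metric. -/
theorem pushforward_rakotch_contracting
    {X Y : Type*} [MetricSpace X] [CompactSpace X] [MeasurableSpace X] [BorelSpace X]
    [MetricSpace Y] [CompactSpace Y] [MeasurableSpace Y] [BorelSpace Y]
    (f : X → Y) (φ : ℝ → ℝ)
    (hcontr : ∀ x x' : X, dist (f x) (f x') ≤ φ (dist x x'))
    (hrak : ∀ a : ℝ, 0 < a → ∃ c : ℝ, c < 1 ∧ ∀ t, a ≤ t → φ t ≤ c * t) :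
    ∃ ψ : ℝ → ℝ, (∀ a : ℝ, 0 < a → ∃ c : ℝ, c < 1 ∧ ∀ t, a ≤ t → ψ t ≤ c * t) ∧
      ∀ μ η : Measure X, IsProbabilityMeasure μ → IsProbabilityMeasure η →
        wassersteinDist (μ.map f) (η.map f) ≤ ψ (wassersteinDist μ η) := by
  have hφ : IsRakotchModulus φ := hrak
  have hf : LipschitzWith 1 f := hφ.lipschitzWith_one hcontr
  refine ⟨averagedModulus φ, hφ.averagedModulus, fun μ η _ _ => ?_⟩
  rcases (wassersteinDist_nonneg μ η).eq_or_lt with hW | hW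
  · have h := wassersteinDist_map_le_mul_of_lipschitzWith_one hf zero_le_one le_rfl
      (μ := μ) (η := η) fun x x' _ => by simpa using hf.dist_le_mul x x'
    simpa [averagedModulus, ← hW] using h
  · exact wassersteinDist_map_le_mul_of_lipschitzWith_one hf
      (hφ.contractionRatio_nonneg (half_pos hW)) (hφ.contractionRatio_lt_one (half_pos hW)).le
      fun x x' hx => (hcontr x x').trans (hφ.le_contractionRatio_mul (half_pos hW) hx)
end

section
/- Let D be a nonempty compact subset of a complete metric space X and (f_n) a sequence of self-maps of X with f_n(D) ⊆ D for all n, such that each f_n is φ-contracting for a common nondecreasing φ : [0,∞) → [0,∞) with sup_{t≥δ} φ(t)/t < 1 for every δ > 0. Then the intersection ⋂_{n} f_0 ∘ f_1 ∘ ⋯ ∘ f_n(D) is a singleton. -/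
/-!
The sets `Sₙ = f 0 ∘ ⋯ ∘ f n (D)` are nonempty, compact and decreasing, so their intersection
is nonempty. Any two points of `Sₙ` are images of points of `D` under `n + 1` of the maps, so
their distance is at most `φ^[n+1] (diam D)`. The Rakotch condition forces these iterates below
every `ε > 0`: as long as they stay above `ε` they shrink geometrically by a fixed factor `c < 1`.
-/

/-- The composition `f 0 ∘ f 1 ∘ ⋯ ∘ f n`. -/
def compTo {X : Type*} (f : ℕ → X → X) : ℕ → X → X
  | 0 => f 0
  | n + 1 => compTo f n ∘ f (n + 1)

def IsRakotch (φ : ℝ → ℝ) : Prop :=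
  ∀ δ : ℝ, 0 < δ → ∃ c : ℝ, c < 1 ∧ ∀ t, δ ≤ t → φ t ≤ c * t

namespace IsRakotch

variable {φ : ℝ → ℝ}

theorem le_self (hφ : IsRakotch φ) {t : ℝ} (ht : 0 < t) : φ t ≤ t := by
  obtain ⟨c, hc, hφc⟩ := hφ t ht
  linarith [hφc t le_rfl, mul_lt_mul_of_pos_right hc ht]

theorem exists_iterate_le (hφ : IsRakotch φ) (d : ℝ) {ε : ℝ} (hε : 0 < ε) :
    ∃ N, φ^[N] d ≤ ε := by
  by_contra! hlarge
  obtain ⟨c, hc, hφc⟩ := hφ ε hε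
  set c' := max c 0
  have hgeom : ∀ n, φ^[n] d ≤ c' ^ n * d := by
    intro n
    induction n with
    | zero => simp
    | succ n ih =>
      rw [Function.iterate_succ_apply']
      calc φ (φ^[n] d) ≤ c * φ^[n] d := hφc _ (hlarge n).le
        _ ≤ c' * φ^[n] d := mul_le_mul_of_nonneg_right (le_max_left c 0) (hε.trans (hlarge n)).le
        _ ≤ c' * (c' ^ n * d) := by gcongr
        _ = c' ^ (n + 1) * d := by ring
  have hsmall : ∀ᶠ n in Filter.atTop, c' ^ n * d < ε := by
    refine (Filter.Tendsto.eventually_lt_const hε) ?_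
    simpa using (tendsto_pow_atTop_nhds_zero_of_lt_one (le_max_right c 0)
      (max_lt hc one_pos)).mul_const d
  obtain ⟨N, hN⟩ := hsmall.exists
  exact (hlarge N).not_gt ((hgeom N).trans_lt hN)

end IsRakotch

section Composition

variable {X : Type*} {f : ℕ → X → X}

theorem continuous_compTo [TopologicalSpace X] (hf : ∀ n, Continuous (f n)) (n : ℕ) :
    Continuous (compTo f n) := by
  induction n with
  | zero => exact hf 0
  | succ n ih => exact ih.comp (hf (n + 1))

theorem image_compTo_succ_subset {D : Set X} (hmaps : ∀ n, Set.MapsTo (f n) D D) (n : ℕ) :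
    compTo f (n + 1) '' D ⊆ compTo f n '' D := by
  rw [compTo, Set.image_comp]
  exact Set.image_mono (hmaps (n + 1)).image_subset

end Composition

section Contractions

variable {X : Type*} [MetricSpace X] {φ : ℝ → ℝ}

theorem lipschitzWith_one_of_dist_le_rakotch (hφ : IsRakotch φ) {g : X → X}
    (hg : ∀ x x', dist (g x) (g x') ≤ φ (dist x x')) : LipschitzWith 1 g := by
  refine LipschitzWith.of_dist_le_mul fun x x' => ?_
  rcases eq_or_ne x x' with rfl | hne
  · simp
  · simpa using (hg x x').trans (hφ.le_self (dist_pos.mpr hne))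

variable {f : ℕ → X → X}

theorem dist_compTo_le (hmono : Monotone φ)
    (hcontr : ∀ n, ∀ x x' : X, dist (f n x) (f n x') ≤ φ (dist x x')) (n : ℕ) (x x' : X) :
    dist (compTo f n x) (compTo f n x') ≤ φ^[n + 1] (dist x x') := by
  induction n generalizing x x' with
  | zero => exact hcontr 0 x x'
  | succ n ih =>
    calc dist (compTo f n (f (n + 1) x)) (compTo f n (f (n + 1) x'))
        ≤ φ^[n + 1] (dist (f (n + 1) x) (f (n + 1) x')) := ih _ _
      _ ≤ φ^[n + 1] (φ (dist x x')) := hmono.iterate (n + 1) (hcontr (n + 1) x x')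
      _ = φ^[n + 1 + 1] (dist x x') := (Function.iterate_succ_apply φ (n + 1) _).symm

theorem nonempty_iInter_image_compTo {D : Set X} (hD : IsCompact D) (hDne : D.Nonempty)
    (hmaps : ∀ n, Set.MapsTo (f n) D D) (hf : ∀ n, Continuous (f n)) :
    (⋂ n, compTo f n '' D).Nonempty :=
  have hcompact n : IsCompact (compTo f n '' D) := hD.image (continuous_compTo hf n)
  IsCompact.nonempty_iInter_of_sequence_nonempty_isCompact_isClosed _
    (image_compTo_succ_subset hmaps) (fun _ => hDne.image _) (hcompact 0)
    (fun n => (hcompact n).isClosed)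

theorem subsingleton_iInter_image_compTo {D : Set X} (hD : Bornology.IsBounded D)
    (hφ : IsRakotch φ) (hmono : Monotone φ)
    (hcontr : ∀ n, ∀ x x' : X, dist (f n x) (f n x') ≤ φ (dist x x')) :
    (⋂ n, compTo f n '' D).Subsingleton := by
  intro p hp q hq
  refine eq_of_forall_dist_le fun ε hε => ?_
  obtain ⟨N, hN⟩ := hφ.exists_iterate_le (φ (Metric.diam D)) hε
  obtain ⟨x, hx, rfl⟩ := Set.mem_iInter.mp hp N
  obtain ⟨x', hx', rfl⟩ := Set.mem_iInter.mp hq N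
  calc dist (compTo f N x) (compTo f N x') ≤ φ^[N + 1] (dist x x') :=
        dist_compTo_le hmono hcontr N x x'
    _ ≤ φ^[N + 1] (Metric.diam D) := hmono.iterate _ (Metric.dist_le_diam_of_mem hD hx hx')
    _ = φ^[N] (φ (Metric.diam D)) := Function.iterate_succ_apply φ N _
    _ ≤ ε := hN

end Contractions

theorem inter_images_singleton_general {X : Type*} [MetricSpace X]
    (D : Set X) (hDc : IsCompact D) (hDne : D.Nonempty)
    (f : ℕ → X → X) (hmaps : ∀ n, Set.MapsTo (f n) D D)
    (φ : ℝ → ℝ) (hmono : Monotone φ)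
    (hrak : ∀ δ : ℝ, 0 < δ → ∃ c : ℝ, c < 1 ∧ ∀ t, δ ≤ t → φ t ≤ c * t)
    (hcontr : ∀ n, ∀ x x' : X, dist (f n x) (f n x') ≤ φ (dist x x')) :
    ∃ p : X, (⋂ n : ℕ, compTo f n '' D) = {p} := by
  have hf n : Continuous (f n) :=
    (lipschitzWith_one_of_dist_le_rakotch hrak (hcontr n)).continuous
  exact Set.exists_eq_singleton_iff_nonempty_subsingleton.mpr
    ⟨nonempty_iInter_image_compTo hDc hDne hmaps hf,
      subsingleton_iInter_image_compTo hDc.isBounded hrak hmono hcontr⟩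

/-- If `D` is a nonempty compact subset of a complete metric space, invariant under each
map of a sequence `(f n)` of `φ`-contractions for a common nondecreasing `φ` satisfying
the Rakotch condition, then `⋂ₙ f 0 ∘ ⋯ ∘ f n (D)` is a singleton. -/
theorem inter_images_singleton {X : Type*} [MetricSpace X] [CompleteSpace X]
    (D : Set X) (hDc : IsCompact D) (hDne : D.Nonempty)
    (f : ℕ → X → X) (hmaps : ∀ n, Set.MapsTo (f n) D D)
    (φ : ℝ → ℝ) (hmono : Monotone φ) (h0 : φ 0 = 0)
    (hrak : ∀ δ : ℝ, 0 < δ → ∃ c : ℝ, c < 1 ∧ ∀ t, δ ≤ t → φ t ≤ c * t)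
    (hcontr : ∀ n, ∀ x x' : X, dist (f n x) (f n x') ≤ φ (dist x x')) :
    ∃ p : X, (⋂ n : ℕ, compTo f n '' D) = {p} :=
  inter_images_singleton_general D hDc hDne f hmaps φ hmono hrak hcontr
end
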